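/- arXiv:2303.09793 — 2 statements merged into one kernel-verified Lean document; each statement's English description precedes it below -/
import Mathlib

section
/- If X ~ N(0_n, I_n) is an n-dimensional standard Gaussian random vector, then for every p > 2, E[‖X‖₂^p] ≤ (p + n)^{p/2}. -/
open MeasureTheory ProbabilityTheory Real Filter

/-- The standard Gaussian measure `N(0ₙ, Iₙ)` on `ℝⁿ` (as `EuclideanSpace ℝ (Fin n)`). -/
noncomputable def stdGaussian (n : ℕ) : Measure (EuclideanSpace ℝ (Fin n)) :=
  (Measure.pi fun _ : Fin n => gaussianReal 0 1).map
    (MeasurableEquiv.toLp 2 (Fin n → ℝ))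

/-! A Chernoff-type argument. For `t ≥ 0` and `q, s > 0` one has
`t ^ q ≤ (q / s) ^ q * e ^ (-q) * e ^ (s * t)` (from `x ≤ e ^ (x - 1)`), and for `s < 1/2`
the Gaussian computation gives `E[e ^ (s ‖X‖²)] = (1 - 2s) ^ (-n/2)`. Applying the first bound
to `t = ‖X‖²`, `q = p/2` and choosing `s = p / (2(p + n))` yields
`E‖X‖^p ≤ (p + n) ^ (p/2) * e ^ (-p/2) * (1 + p/n) ^ (n/2)`, and the last two factors
multiply to at most `1` since `1 + p/n ≤ e ^ (p/n)`. -/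

theorem one_add_rpow_le_exp_mul {x y : ℝ} (hx : -1 ≤ x) (hy : 0 ≤ y) :
    (1 + x) ^ y ≤ exp (x * y) := by
  rw [exp_mul]
  exact rpow_le_rpow (by linarith) (by linarith [add_one_le_exp x]) hy

theorem rpow_le_mul_exp {q s t : ℝ} (hq : 0 < q) (hs : 0 < s) (ht : 0 ≤ t) :
    t ^ q ≤ (q / s) ^ q * exp (-q) * exp (s * t) := by
  have hst : 0 ≤ s * t / q := by positivity
  have key := one_add_rpow_le_exp_mul (x := s * t / q - 1) (by linarith) hq.le
  rw [add_sub_cancel] at key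
  calc t ^ q = (q / s) ^ q * (s * t / q) ^ q := by
        rw [← mul_rpow (by positivity) (by positivity)]
        congr 1
        field_simp
    _ ≤ (q / s) ^ q * exp ((s * t / q - 1) * q) := by gcongr
    _ = (q / s) ^ q * exp (-q) * exp (s * t) := by
        rw [mul_assoc, ← exp_add]
        congr 2
        field_simp
        ring

theorem integral_rpow_le_mul_integral_exp {α : Type*} [MeasurableSpace α] {μ : Measure α}
    {f : α → ℝ} (hf : 0 ≤ f) {q s : ℝ} (hq : 0 < q) (hs : 0 < s)
    (hexp : Integrable (fun x ↦ exp (s * f x)) μ) :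
    ∫ x, f x ^ q ∂μ ≤ (q / s) ^ q * exp (-q) * ∫ x, exp (s * f x) ∂μ := by
  rw [← integral_const_mul]
  exact integral_mono_of_nonneg (ae_of_all _ fun x ↦ rpow_nonneg (hf x) q)
    (hexp.const_mul _) (ae_of_all _ fun x ↦ rpow_le_mul_exp hq hs (hf x))

theorem integral_exp_mul_sq_gaussianReal {s : ℝ} (hs : s < 1 / 2) :
    ∫ x, exp (s * x ^ 2) ∂gaussianReal 0 1 = (1 - 2 * s) ^ (-(1 / 2 : ℝ)) := by
  have hdens (x : ℝ) : gaussianPDFReal 0 1 x • exp (s * x ^ 2)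
      = (√(2 * π))⁻¹ * exp (-(1 / 2 - s) * x ^ 2) := by
    simp only [gaussianPDFReal, NNReal.coe_one, mul_one, sub_zero, smul_eq_mul]
    rw [mul_assoc, ← exp_add]
    congr 2
    ring
  rw [integral_gaussianReal_eq_integral_smul one_ne_zero]
  simp_rw [hdens]
  rw [integral_const_mul, integral_gaussian, ← sqrt_inv, ← sqrt_mul (by positivity),
    rpow_neg (by linarith), ← sqrt_eq_rpow, ← sqrt_inv]
  congr 1
  field_simp

theorem integral_exp_mul_norm_sq_stdGaussian (n : ℕ) {s : ℝ} (hs : s < 1 / 2) :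
    ∫ x, exp (s * ‖x‖ ^ 2) ∂stdGaussian n = (1 - 2 * s) ^ (-(n / 2 : ℝ)) := by
  have hprod (y : Fin n → ℝ) : exp (s * ‖MeasurableEquiv.toLp 2 (Fin n → ℝ) y‖ ^ 2)
      = ∏ i, exp (s * y i ^ 2) := by
    rw [EuclideanSpace.real_norm_sq_eq, Finset.mul_sum, exp_sum]
    rfl
  rw [_root_.stdGaussian, integral_map_equiv]
  simp_rw [hprod]
  rw [integral_fintype_prod_eq_pow (fun t ↦ exp (s * t ^ 2)),
    integral_exp_mul_sq_gaussianReal hs, Fintype.card_fin, ← rpow_natCast,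
    ← rpow_mul (by linarith)]
  ring_nf

theorem integrable_exp_mul_norm_sq_stdGaussian (n : ℕ) {s : ℝ} (hs : s < 1 / 2) :
    Integrable (fun x ↦ exp (s * ‖x‖ ^ 2)) (stdGaussian n) := by
  refine Integrable.of_integral_ne_zero ?_
  rw [integral_exp_mul_norm_sq_stdGaussian n hs]
  exact (rpow_pos_of_pos (by linarith) _).ne'

/-- If `X ~ N(0ₙ, Iₙ)`, then `E[‖X‖₂ ^ p] ≤ (p + n) ^ (p/2)` for all `p > 2`. -/
theorem gaussian_norm_moment_le_of_two_lt (n : ℕ) (p : ℝ) (hp : 2 < p) :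
    ∫ x, ‖x‖ ^ p ∂(stdGaussian n) ≤ (p + n) ^ (p / 2) := by
  have hp0 : 0 < p := by linarith
  rcases n.eq_zero_or_pos with rfl | hn
  · have hzero (x : EuclideanSpace ℝ (Fin 0)) : ‖x‖ ^ p = 0 := by
      rw [Subsingleton.elim x 0, norm_zero, zero_rpow hp0.ne']
    simp only [hzero, integral_zero]
    positivity
  have hn' : (0 : ℝ) < n := by exact_mod_cast hn
  set s := p / (2 * (p + n)) with hs_def
  have hs : s < 1 / 2 := by
    rw [div_lt_div_iff₀ (by positivity) two_pos]
    linarith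
  have hnorm (x : EuclideanSpace ℝ (Fin n)) : ‖x‖ ^ p = (‖x‖ ^ 2) ^ (p / 2) := by
    rw [← rpow_natCast, ← rpow_mul (norm_nonneg x)]
    ring_nf
  have hqs : p / 2 / s = p + n := by rw [hs_def]; field_simp
  have h2s : 1 - 2 * s = (1 + p / n)⁻¹ := by rw [hs_def]; field_simp; ring
  calc ∫ x, ‖x‖ ^ p ∂stdGaussian n
      ≤ (p / 2 / s) ^ (p / 2) * exp (-(p / 2)) * ∫ x, exp (s * ‖x‖ ^ 2) ∂stdGaussian n := by
        simp_rw [hnorm]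
        exact integral_rpow_le_mul_integral_exp (fun x ↦ sq_nonneg ‖x‖) (by positivity)
          (by positivity) (integrable_exp_mul_norm_sq_stdGaussian n hs)
    _ = (p + n) ^ (p / 2) * exp (-(p / 2)) * (1 + p / n) ^ (n / 2 : ℝ) := by
        rw [integral_exp_mul_norm_sq_stdGaussian n hs, hqs, h2s, inv_rpow (by positivity),
          ← rpow_neg (by positivity), neg_neg]
    _ ≤ (p + n) ^ (p / 2) * exp (-(p / 2)) * exp (p / n * (n / 2)) := by
        gcongr
        exact one_add_rpow_le_exp_mul (by linarith [div_nonneg hp0.le hn'.le]) (by positivity)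
    _ = (p + n) ^ (p / 2) := by
        rw [mul_assoc, ← exp_add, show -(p / 2) + p / n * (n / 2) = 0 by field_simp; ring,
          exp_zero, mul_one]
end

section
/- Let f: ℝⁿ → ℝ be convex and continuously differentiable with L₁-Lipschitz gradient with respect to ‖·‖₂, and let μ > 0. Then for every x ∈ ℝⁿ, the gradient ∇f_μ(x) of the Gaussian approximation f_μ is a δ-subgradient of f at x with δ = (μ²/2) L₁ n; that is, f(y) ≥ f(x) + ⟨∇f_μ(x), y − x⟩ − (μ²/2) L₁ n for all y ∈ ℝⁿ. -/
/-!
Write `f_μ(x) = E f(x + μU)` with `E U = 0` and `E ‖U‖² = n`. Jensen's inequality gives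
`f ≤ f_μ`, and averaging the descent lemma `f(x + v) ≤ f(x) + f'(x) v + (L₁/2) ‖v‖²` over
`v = μU` gives `f_μ ≤ f + δ` with `δ = (μ²/2) L₁ n`. As an average of translates of `f`, the
smoothing `f_μ` is convex, and it is differentiable by dominated differentiation under the
integral, so `f(y) + δ ≥ f_μ(y) ≥ f_μ(x) + ⟨∇f_μ(x), y - x⟩ ≥ f(x) + ⟨∇f_μ(x), y - x⟩`.
-/

open MeasureTheory ProbabilityTheory Real Filter
open scoped RealInnerProductSpace

/-- Nesterov's Gaussian approximation `f_μ(x) = E[f(x + μ U)]`, `U ~ N(0ₙ, Iₙ)`. -/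
noncomputable def gaussApprox {n : ℕ} (f : EuclideanSpace ℝ (Fin n) → ℝ) (μ : ℝ)
    (x : EuclideanSpace ℝ (Fin n)) : ℝ :=
  ∫ u, f (x + μ • u) ∂(stdGaussian n)

open Set

section Calculus

variable {E : Type*} [NormedAddCommGroup E] [NormedSpace ℝ E] {f : E → ℝ}

theorem ConvexOn.add_le_of_hasFDerivAt (hf : ConvexOn ℝ univ f) {f' : E →L[ℝ] ℝ} {x : E}
    (hx : HasFDerivAt f f' x) (y : E) : f x + f' (y - x) ≤ f y := by
  have hline : HasDerivAt (f ∘ AffineMap.lineMap (k := ℝ) x y) (f' (y - x)) 0 := by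
    refine hx.comp_hasDerivAt_of_eq 0 AffineMap.hasDerivAt_lineMap ?_
    simp
  have hslope := (hf.comp_affineMap (AffineMap.lineMap (k := ℝ) x y)).le_slope_of_hasDerivAt
    (mem_univ 0) (mem_univ 1) zero_lt_one hline
  simp only [slope_def_field, Function.comp_apply, AffineMap.lineMap_apply_zero,
    AffineMap.lineMap_apply_one, sub_zero, div_one] at hslope
  linarith

theorem abs_sub_sub_fderiv_le_of_lipschitzWith (hf : Differentiable ℝ f) {L : NNReal}
    (hL : LipschitzWith L (fderiv ℝ f)) (x v : E) :
    |f (x + v) - f x - fderiv ℝ f x v| ≤ L / 2 * ‖v‖ ^ 2 := by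
  set g : ℝ → ℝ := fun t => f (x + t • v) - f x - t * fderiv ℝ f x v
  have hg (t : ℝ) : HasDerivAt g ((fderiv ℝ f (x + t • v) - fderiv ℝ f x) v) t := by
    have hpath : HasDerivAt (fun t : ℝ => x + t • v) v t := by
      simpa using ((hasDerivAt_id t).smul_const v).const_add x
    have := (((hf _).hasFDerivAt.comp_hasDerivAt t hpath).sub_const (f x)).sub
      ((hasDerivAt_id t).mul_const (fderiv ℝ f x v))
    exact this.congr_deriv (by simp)
  have hB (t : ℝ) : HasDerivAt (fun t : ℝ => L / 2 * t ^ 2 * ‖v‖ ^ 2) (L * t * ‖v‖ ^ 2) t := by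
    refine (((hasDerivAt_pow 2 t).const_mul ((L : ℝ) / 2)).mul_const (‖v‖ ^ 2)).congr_deriv ?_
    simp only [Nat.cast_ofNat, pow_one, Nat.add_one_sub_one]
    ring
  have hbound (t : ℝ) (ht : t ∈ Ico (0 : ℝ) 1) :
      ‖(fderiv ℝ f (x + t • v) - fderiv ℝ f x) v‖ ≤ L * t * ‖v‖ ^ 2 := by
    calc ‖(fderiv ℝ f (x + t • v) - fderiv ℝ f x) v‖
        ≤ ‖fderiv ℝ f (x + t • v) - fderiv ℝ f x‖ * ‖v‖ := ContinuousLinearMap.le_opNorm _ _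
      _ ≤ L * ‖t • v‖ * ‖v‖ := by
          gcongr
          simpa [dist_eq_norm] using hL.dist_le_mul (x + t • v) x
      _ = L * t * ‖v‖ ^ 2 := by rw [norm_smul, Real.norm_of_nonneg ht.1]; ring
  have := image_norm_le_of_norm_deriv_right_le_deriv_boundary (a := 0) (b := 1)
    (fun t _ => (hg t).continuousAt.continuousWithinAt) (fun t _ => (hg t).hasDerivWithinAt)
    (by simp [g]) hB hbound (right_mem_Icc.2 zero_le_one)
  simpa [g] using this

end Calculus

section StdGaussian

variable {E : Type*} [NormedAddCommGroup E] [InnerProductSpace ℝ E] [FiniteDimensional ℝ E]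
  [MeasurableSpace E] [BorelSpace E]

theorem integral_norm_sq_stdGaussian :
    ∫ x, ‖x‖ ^ 2 ∂(ProbabilityTheory.stdGaussian E) = Module.finrank ℝ E := by
  set b := stdOrthonormalBasis ℝ E
  have hcoord (i : Fin (Module.finrank ℝ E)) :
      ∫ x, ⟪b i, x⟫ ^ 2 ∂(ProbabilityTheory.stdGaussian E) = 1 := by
    have hvar := variance_dual_stdGaussian (innerSL ℝ (b i))
    rw [variance_of_integral_eq_zero (by fun_prop) (integral_strongDual_stdGaussian _),
      innerSL_apply_norm, b.orthonormal.1 i, one_pow] at hvar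
    simpa using hvar
  have hint (i : Fin (Module.finrank ℝ E)) :
      Integrable (fun x => ⟪b i, x⟫ ^ 2) (ProbabilityTheory.stdGaussian E) :=
    (IsGaussian.memLp_dual _ (innerSL ℝ (b i)) 2 (by simp)).integrable_sq
  simp_rw [← b.sum_sq_inner_right]
  rw [integral_finsetSum _ fun i _ => hint i]
  simp [hcoord]

end StdGaussian

section Smoothing

variable {E : Type*} [NormedAddCommGroup E] [NormedSpace ℝ E] [MeasurableSpace E]
  {ν : Measure E} {f : E → ℝ} {L : NNReal} (μ : ℝ)

theorem ConvexOn.integral_comp_add_smul (hf : ConvexOn ℝ univ f)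
    (hint : ∀ x, Integrable (fun u => f (x + μ • u)) ν) :
    ConvexOn ℝ univ (fun x => ∫ u, f (x + μ • u) ∂ν) := by
  refine ⟨convex_univ, fun a _ b _ s t hs ht hst => ?_⟩
  have hpt (u : E) : f (s • a + t • b + μ • u) ≤ s * f (a + μ • u) + t * f (b + μ • u) := by
    have h := hf.2 (mem_univ (a + μ • u)) (mem_univ (b + μ • u)) hs ht hst
    rwa [smul_add, smul_add, add_add_add_comm, ← add_smul, hst, one_smul] at h
  calc ∫ u, f (s • a + t • b + μ • u) ∂ν
      ≤ ∫ u, (s * f (a + μ • u) + t * f (b + μ • u)) ∂ν :=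
        integral_mono (hint _) (((hint a).const_mul s).add ((hint b).const_mul t)) hpt
    _ = s * ∫ u, f (a + μ • u) ∂ν + t * ∫ u, f (b + μ • u) ∂ν := by
        rw [integral_add ((hint a).const_mul s) ((hint b).const_mul t), integral_const_mul,
          integral_const_mul]

theorem integrable_comp_add_smul [IsFiniteMeasure ν] [OpensMeasurableSpace E]
    (hf : Differentiable ℝ f) (hL : LipschitzWith L (fderiv ℝ f)) (hν : MemLp id 2 ν) (x : E) :
    Integrable (fun u => f (x + μ • u)) ν := by
  have hlin : Integrable (fun u => f x + fderiv ℝ f x (μ • u)) ν :=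
    (integrable_const _).add ((fderiv ℝ f x).integrable_comp ((hν.integrable one_le_two).smul μ))
  have hrem : Integrable (fun u => f (x + μ • u) - f x - fderiv ℝ f x (μ • u)) ν := by
    refine Integrable.mono' ((hν.integrable_norm_pow two_ne_zero).const_mul (L / 2 * μ ^ 2))
      (by have := hf.continuous; fun_prop) (ae_of_all _ fun u => ?_)
    have h := abs_sub_sub_fderiv_le_of_lipschitzWith hf hL x (μ • u)
    rw [norm_smul, mul_pow, Real.norm_eq_abs, sq_abs] at h
    simpa [mul_assoc] using h
  exact (hlin.add hrem).congr (ae_of_all _ fun u => by simp only [Pi.add_apply]; ring)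

theorem hasFDerivAt_integral_comp_add_smul [IsFiniteMeasure ν] [OpensMeasurableSpace E]
    [SecondCountableTopology E] (hf : Differentiable ℝ f) (hL : LipschitzWith L (fderiv ℝ f))
    (hν : Integrable id ν) {x : E} (hint : Integrable (fun u => f (x + μ • u)) ν) :
    HasFDerivAt (fun x => ∫ u, f (x + μ • u) ∂ν) (∫ u, fderiv ℝ f (x + μ • u) ∂ν) x := by
  have hcont := hf.continuous
  have hcont' := hL.continuous
  refine hasFDerivAt_integral_of_dominated_of_fderiv_le (F := fun w u => f (w + μ • u))
    (F' := fun w u => fderiv ℝ f (w + μ • u))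
    (bound := fun u => ‖fderiv ℝ f x‖ + L * (1 + |μ| * ‖u‖)) (Metric.ball_mem_nhds x one_pos)
    (Eventually.of_forall fun w => by fun_prop) hint (by fun_prop)
    (ae_of_all _ fun u w hw => ?_)
    ((integrable_const _).add (((integrable_const 1).add (hν.norm.const_mul |μ|)).const_mul _))
    (ae_of_all _ fun u w _ => ?_)
  · have hdist : ‖w + μ • u - x‖ ≤ 1 + |μ| * ‖u‖ := by
      calc ‖w + μ • u - x‖ = ‖(w - x) + μ • u‖ := by rw [add_sub_right_comm]
        _ ≤ ‖w - x‖ + ‖μ • u‖ := norm_add_le _ _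
        _ ≤ 1 + |μ| * ‖u‖ := by
            rw [norm_smul, Real.norm_eq_abs]
            gcongr
            exact (mem_ball_iff_norm.1 hw).le
    calc ‖fderiv ℝ f (w + μ • u)‖
        ≤ ‖fderiv ℝ f x‖ + ‖fderiv ℝ f (w + μ • u) - fderiv ℝ f x‖ := norm_le_insert' _ _
      _ ≤ ‖fderiv ℝ f x‖ + L * ‖w + μ • u - x‖ := by
          gcongr
          simpa [dist_eq_norm] using hL.dist_le_mul (w + μ • u) x
      _ ≤ ‖fderiv ℝ f x‖ + L * (1 + |μ| * ‖u‖) := by gcongr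
  · exact (hf _).hasFDerivAt.comp w ((hasFDerivAt_id w).add_const _)

variable [CompleteSpace E] [IsProbabilityMeasure ν]

theorem ConvexOn.le_integral_comp_add_smul (hf : ConvexOn ℝ univ f) (hcont : Continuous f)
    (hν : Integrable id ν) (hmean : ∫ u, u ∂ν = 0) {x : E}
    (hint : Integrable (fun u => f (x + μ • u)) ν) :
    f x ≤ ∫ u, f (x + μ • u) ∂ν := by
  have hid : Integrable (fun u => μ • u) ν := hν.smul μ
  have hcenter : ∫ u, (x + μ • u) ∂ν = x := by
    rw [integral_add (integrable_const x) hid, integral_smul, hmean, smul_zero, add_zero,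
      integral_const, probReal_univ, one_smul]
  have hjensen := hf.map_integral_le (f := fun u => x + μ • u) hcont.continuousOn isClosed_univ
    (ae_of_all _ fun _ => mem_univ _) ((integrable_const x).add hid) hint
  rwa [hcenter] at hjensen

theorem integral_comp_add_smul_le [OpensMeasurableSpace E] (hf : Differentiable ℝ f)
    (hL : LipschitzWith L (fderiv ℝ f)) (hν : MemLp id 2 ν) (hmean : ∫ u, u ∂ν = 0) (x : E) :
    ∫ u, f (x + μ • u) ∂ν ≤ f x + L / 2 * μ ^ 2 * ∫ u, ‖u‖ ^ 2 ∂ν := by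
  have hid : Integrable (fun u => μ • u) ν := (hν.integrable one_le_two).smul μ
  have hlin : Integrable (fun u => f x + fderiv ℝ f x (μ • u)) ν :=
    (integrable_const _).add ((fderiv ℝ f x).integrable_comp hid)
  have hsq : Integrable (fun u => ‖u‖ ^ 2) ν := hν.integrable_norm_pow two_ne_zero
  have hmean' : ∫ u, fderiv ℝ f x (μ • u) ∂ν = 0 := by
    rw [(fderiv ℝ f x).integral_comp_comm hid, integral_smul, hmean, smul_zero, map_zero]
  calc ∫ u, f (x + μ • u) ∂ν
      ≤ ∫ u, (f x + fderiv ℝ f x (μ • u) + L / 2 * μ ^ 2 * ‖u‖ ^ 2) ∂ν := by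
        refine integral_mono (integrable_comp_add_smul μ hf hL hν x)
          (hlin.add (hsq.const_mul _)) fun u => ?_
        have h := abs_sub_sub_fderiv_le_of_lipschitzWith hf hL x (μ • u)
        rw [norm_smul, mul_pow, Real.norm_eq_abs, sq_abs] at h
        linarith [le_abs_self (f (x + μ • u) - f x - fderiv ℝ f x (μ • u))]
    _ = f x + L / 2 * μ ^ 2 * ∫ u, ‖u‖ ^ 2 ∂ν := by
        rw [integral_add hlin (hsq.const_mul _),
          integral_add (integrable_const _) ((fderiv ℝ f x).integrable_comp hid), hmean',
          integral_const, integral_const_mul]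
        simp

theorem ConvexOn.add_fderiv_integral_comp_add_smul_sub_le [OpensMeasurableSpace E]
    [SecondCountableTopology E] (hconv : ConvexOn ℝ univ f) (hf : Differentiable ℝ f)
    (hL : LipschitzWith L (fderiv ℝ f)) (hν : MemLp id 2 ν) (hmean : ∫ u, u ∂ν = 0) (x y : E) :
    f x + fderiv ℝ (fun z => ∫ u, f (z + μ • u) ∂ν) x (y - x)
      - L / 2 * μ ^ 2 * ∫ u, ‖u‖ ^ 2 ∂ν ≤ f y := by
  have hint := integrable_comp_add_smul μ hf hL hν
  have hdiff := (hasFDerivAt_integral_comp_add_smul μ hf hL (hν.integrable one_le_two)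
    (hint x)).differentiableAt
  have htangent :=
    (hconv.integral_comp_add_smul μ hint).add_le_of_hasFDerivAt hdiff.hasFDerivAt y
  have hlower := hconv.le_integral_comp_add_smul μ hf.continuous (hν.integrable one_le_two) hmean
    (hint x)
  have hupper := integral_comp_add_smul_le μ hf hL hν hmean y
  linarith

end Smoothing

theorem stdGaussian_eq_stdGaussian_euclideanSpace {n : ℕ} :
    stdGaussian n = ProbabilityTheory.stdGaussian (EuclideanSpace ℝ (Fin n)) :=
  map_pi_eq_stdGaussian

theorem gradient_gaussApprox_delta_subgradient_smooth_general {n : ℕ}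
    (f : EuclideanSpace ℝ (Fin n) → ℝ) (hconv : ConvexOn ℝ Set.univ f)
    (hsmooth : ContDiff ℝ 1 f)
    (L₁ : NNReal) (hgrad : LipschitzWith L₁ (gradient f)) (μ : ℝ)
    (x y : EuclideanSpace ℝ (Fin n)) :
    f y ≥ f x + ⟪gradient (gaussApprox f μ) x, y - x⟫ - μ ^ 2 / 2 * L₁ * n := by
  have hL : LipschitzWith L₁ (fderiv ℝ f) := by
    simpa [← toDual_comp_gradient] using (InnerProductSpace.toDual ℝ _).lipschitz.comp hgrad
  have key := hconv.add_fderiv_integral_comp_add_smul_sub_le μ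
    (hsmooth.differentiable one_ne_zero) hL IsGaussian.memLp_two_id integral_id_stdGaussian x y
  rw [integral_norm_sq_stdGaussian, finrank_euclideanSpace_fin] at key
  have hA : gaussApprox f μ = fun z => ∫ u, f (z + μ • u) ∂(ProbabilityTheory.stdGaussian _) := by
    ext z
    rw [gaussApprox, stdGaussian_eq_stdGaussian_euclideanSpace]
  rw [inner_gradient_left, hA]
  linarith

/-- If `f : ℝⁿ → ℝ` is convex, continuously differentiable with `L₁`-Lipschitz gradient
w.r.t. `‖·‖₂`, and `μ > 0`, then for every `x`, `∇f_μ(x)` is a `δ`-subgradient of `f` at `x`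
with `δ = (μ²/2) L₁ n`: `f(y) ≥ f(x) + ⟨∇f_μ(x), y − x⟩ − (μ²/2) L₁ n` for all `y`. -/
theorem gradient_gaussApprox_delta_subgradient_smooth {n : ℕ}
    (f : EuclideanSpace ℝ (Fin n) → ℝ) (hconv : ConvexOn ℝ Set.univ f)
    (hsmooth : ContDiff ℝ 1 f)
    (L₁ : NNReal) (hgrad : LipschitzWith L₁ (gradient f)) (μ : ℝ) (hμ : 0 < μ)
    (x y : EuclideanSpace ℝ (Fin n)) :
    f y ≥ f x + ⟪gradient (gaussApprox f μ) x, y - x⟫ - μ ^ 2 / 2 * L₁ * n :=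
  gradient_gaussApprox_delta_subgradient_smooth_general f hconv hsmooth L₁ hgrad μ x y
end
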